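/- arXiv:2006.10818 — 2 statements merged into one kernel-verified Lean document; each statement's English description precedes it below -/
import Mathlib

section
/- (Optimality of flexible AB-GMRES.) Let A ∈ ℝ^{m×n}, b ∈ ℝ^m, x₀ ∈ ℝ^n, r₀ = b − A x₀ and β = ‖r₀‖₂ with β ≠ 0. Let Z_k ∈ ℝ^{n×k}, let V_{k+1} ∈ ℝ^{m×(k+1)} have orthonormal columns with first column v₁ = r₀/β, and let H̄_k ∈ ℝ^{(k+1)×k} satisfy A Z_k = V_{k+1} H̄_k. Let y_k ∈ ℝ^k minimize ‖β e₁ − H̄_k y‖₂ over y ∈ ℝ^k, and set x_k = x₀ + Z_k y_k. Then x_k minimizes the residual norm over the affine space x₀ + range(Z_k): for every y ∈ ℝ^k, ‖b − A x_k‖₂ ≤ ‖b − A(x₀ + Z_k y)‖₂. -/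
/-! Since `A Z_k = V_{k+1} H̄_k` and `r₀ = β V_{k+1} e₁`, every residual over the search space
factors as `b - A (x₀ + Z_k y) = V_{k+1} (β e₁ - H̄_k y)`. The columns of `V_{k+1}` being
orthonormal, `V_{k+1}` preserves the Euclidean norm, so minimizing the residual over
`x₀ + range Z_k` is the same as the small least-squares problem that `y_k` solves. -/

open Matrix

noncomputable def euclNorm {n : ℕ} (x : Fin n → ℝ) : ℝ :=
  Real.sqrt (∑ i, x i ^ 2)

lemma euclNorm_eq_sqrt_dotProduct {n : ℕ} (x : Fin n → ℝ) : euclNorm x = √(x ⬝ᵥ x) := by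
  simp only [euclNorm, dotProduct, sq]

lemma euclNorm_mulVec_of_transpose_mul_self_eq_one {m k : ℕ} {V : Matrix (Fin m) (Fin k) ℝ}
    (hV : Vᵀ * V = 1) (w : Fin k → ℝ) : euclNorm (V *ᵥ w) = euclNorm w := by
  rw [euclNorm_eq_sqrt_dotProduct, euclNorm_eq_sqrt_dotProduct, dotProduct_mulVec,
    vecMul_mulVec, hV, vecMul_one]

section Residual

variable {R l m n p : Type*} [CommRing R] [Fintype m] [Fintype n] [Fintype p]

lemma mulVec_smul_single_eq_of_col_eq_div {K : Type*} [Field K] [DecidableEq p]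
    {V : Matrix l p K} {r : l → K} {β : K} {j : p} (hβ : β ≠ 0) (hVj : ∀ i, V i j = r i / β) :
    V *ᵥ (β • Pi.single j 1) = r := by
  ext i
  rw [mulVec_smul, mulVec_single_one, Pi.smul_apply, col_apply, hVj, smul_eq_mul,
    mul_div_cancel₀ _ hβ]

lemma sub_mulVec_add_mulVec_eq_mulVec_sub {A : Matrix l m R} {Z : Matrix m n R}
    {V : Matrix l p R} {H : Matrix p n R} (hAZ : A * Z = V * H) {b : l → R} {x₀ : m → R}
    {c : p → R} (hc : V *ᵥ c = b - A *ᵥ x₀) (y : n → R) :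
    b - A *ᵥ (x₀ + Z *ᵥ y) = V *ᵥ (c - H *ᵥ y) := by
  rw [mulVec_add, mulVec_mulVec, hAZ, mulVec_sub, hc, ← mulVec_mulVec]
  abel

end Residual

theorem fgmres_optimality_general {m n k : ℕ}
    (A : Matrix (Fin m) (Fin n) ℝ) (b : Fin m → ℝ) (x₀ : Fin n → ℝ)
    (r₀ : Fin m → ℝ) (β : ℝ)
    (hr₀ : r₀ = b - A.mulVec x₀) (hβ0 : β ≠ 0)
    (Z : Matrix (Fin n) (Fin k) ℝ) (V : Matrix (Fin m) (Fin (k + 1)) ℝ)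
    (Hbar : Matrix (Fin (k + 1)) (Fin k) ℝ)
    (hVtV : Vᵀ * V = 1)
    (hv₁ : ∀ i, V i 0 = r₀ i / β)
    (hAZ : A * Z = V * Hbar)
    (yk : Fin k → ℝ)
    (hyk : ∀ y : Fin k → ℝ,
      euclNorm (β • (Pi.single (0 : Fin (k + 1)) (1 : ℝ) : Fin (k + 1) → ℝ) -
          Hbar.mulVec yk) ≤
        euclNorm (β • (Pi.single (0 : Fin (k + 1)) (1 : ℝ) : Fin (k + 1) → ℝ) -
          Hbar.mulVec y)) :
    ∀ y : Fin k → ℝ,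
      euclNorm (b - A.mulVec (x₀ + Z.mulVec yk)) ≤
        euclNorm (b - A.mulVec (x₀ + Z.mulVec y)) := by
  have hr₀V : V *ᵥ (β • Pi.single 0 1) = b - A *ᵥ x₀ :=
    hr₀ ▸ mulVec_smul_single_eq_of_col_eq_div hβ0 hv₁
  intro y
  rw [sub_mulVec_add_mulVec_eq_mulVec_sub hAZ hr₀V, sub_mulVec_add_mulVec_eq_mulVec_sub hAZ hr₀V,
    euclNorm_mulVec_of_transpose_mul_self_eq_one hVtV,
    euclNorm_mulVec_of_transpose_mul_self_eq_one hVtV]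
  exact hyk y

/-- Optimality of flexible AB-GMRES: if `V_{k+1}` has orthonormal columns with first column
`v₁ = r₀ / β`, `r₀ = b - A x₀`, `β = ‖r₀‖₂ ≠ 0`, `A Z_k = V_{k+1} H̄_k`, and `y_k` minimizes
`‖β e₁ - H̄_k y‖₂`, then `x_k = x₀ + Z_k y_k` minimizes the residual norm over the affine
space `x₀ + range Z_k`. -/
theorem fgmres_optimality {m n k : ℕ}
    (A : Matrix (Fin m) (Fin n) ℝ) (b : Fin m → ℝ) (x₀ : Fin n → ℝ)
    (r₀ : Fin m → ℝ) (β : ℝ)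
    (hr₀ : r₀ = b - A.mulVec x₀) (hβ : β = euclNorm r₀) (hβ0 : β ≠ 0)
    (Z : Matrix (Fin n) (Fin k) ℝ) (V : Matrix (Fin m) (Fin (k + 1)) ℝ)
    (Hbar : Matrix (Fin (k + 1)) (Fin k) ℝ)
    (hVtV : Vᵀ * V = 1)
    (hv₁ : ∀ i, V i 0 = r₀ i / β)
    (hAZ : A * Z = V * Hbar)
    (yk : Fin k → ℝ)
    (hyk : ∀ y : Fin k → ℝ,
      euclNorm (β • (Pi.single (0 : Fin (k + 1)) (1 : ℝ) : Fin (k + 1) → ℝ) -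
          Hbar.mulVec yk) ≤
        euclNorm (β • (Pi.single (0 : Fin (k + 1)) (1 : ℝ) : Fin (k + 1) → ℝ) -
          Hbar.mulVec y)) :
    ∀ y : Fin k → ℝ,
      euclNorm (b - A.mulVec (x₀ + Z.mulVec yk)) ≤
        euclNorm (b - A.mulVec (x₀ + Z.mulVec y)) :=
  fgmres_optimality_general A b x₀ r₀ β hr₀ hβ0 Z V Hbar hVtV hv₁ hAZ yk hyk
end

section
/- (Breakdown characterization for flexible AB-GMRES, converse direction.) Let A ∈ ℝ^{m×n}, b ∈ ℝ^m, x₀ ∈ ℝ^n, r₀ = b − A x₀ and β = ‖r₀‖₂ with β ≠ 0. Let Z_k ∈ ℝ^{n×k}, let V_{k+1} ∈ ℝ^{m×(k+1)} have orthonormal columns with first column v₁ = r₀/β, and let H̄_k ∈ ℝ^{(k+1)×k} be upper Hessenberg (entries h_{ij} with h_{ij} = 0 for i > j + 1) with h_{i+1,i} ≠ 0 for 1 ≤ i ≤ k−1, satisfying A Z_k = V_{k+1} H̄_k. If some y ∈ ℝ^k makes x = x₀ + Z_k y satisfy A x = b, then h_{k+1,k} = 0. -/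
/-!
If the residual equation `A Z y = r₀ = β v₁` is solvable, then `V H̄ y = β V e₁`, and
orthonormality of `V` gives `H̄ y = β e₁`. Were `h_{k+1,k}` nonzero as well, the rows
`2, …, k+1` of `H̄` would form an upper triangular matrix with nonzero diagonal; these rows of
`H̄ y = β e₁` vanish, so `y = 0`, and the first row then forces `β = 0`.
-/

open Matrix

namespace Matrix

theorem mulVec_injective_of_mul_eq_one {m n R : Type*} [Fintype m] [Fintype n] [DecidableEq n]
    [Semiring R] {V : Matrix m n R} {W : Matrix n m R} (hWV : W * V = 1) : Function.Injective V.mulVec :=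
  fun u w h => by simpa only [mulVec_mulVec, hWV, one_mulVec] using congrArg (W *ᵥ ·) h

section Hessenberg

variable {R : Type*} [CommRing R] {k : ℕ} {H : Matrix (Fin (k + 1)) (Fin k) R}

theorem isUpperTriangular_submatrix_succ_of_hessenberg
    (hH : ∀ (i : Fin (k + 1)) (j : Fin k), (j : ℕ) + 1 < (i : ℕ) → H i j = 0) :
    (H.submatrix Fin.succ id).IsUpperTriangular :=
  fun i j hji => hH i.succ j (by simpa using hji)

theorem det_submatrix_succ_ne_zero_of_hessenberg [IsDomain R]
    (hH : ∀ (i : Fin (k + 1)) (j : Fin k), (j : ℕ) + 1 < (i : ℕ) → H i j = 0)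
    (hsub : ∀ j : Fin k, H j.succ j ≠ 0) :
    (H.submatrix Fin.succ id).det ≠ 0 := by
  rw [det_of_isUpperTriangular (isUpperTriangular_submatrix_succ_of_hessenberg hH)]
  exact Finset.prod_ne_zero_iff.mpr fun j _ => hsub j

theorem eq_zero_of_hessenberg_mulVec_eq_single_zero [IsDomain R]
    (hH : ∀ (i : Fin (k + 1)) (j : Fin k), (j : ℕ) + 1 < (i : ℕ) → H i j = 0)
    (hsub : ∀ j : Fin k, H j.succ j ≠ 0) {y : Fin k → R} {β : R}
    (hy : H *ᵥ y = Pi.single 0 β) : y = 0 :=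
  eq_zero_of_mulVec_eq_zero (det_submatrix_succ_ne_zero_of_hessenberg hH hsub) <|
    funext fun i => (congrFun hy i.succ).trans (Pi.single_eq_of_ne i.succ_ne_zero β)

end Hessenberg

end Matrix

/-- Breakdown characterization for flexible AB-GMRES (converse direction): with `β ≠ 0`,
`V_{k+1}` having orthonormal columns and first column `v₁ = r₀ / β`, and `H̄_k` upper
Hessenberg with nonzero subdiagonal entries `h_{i+1,i}` for `i < k` satisfying
`A Z_k = V_{k+1} H̄_k`, if some `y` makes `x = x₀ + Z_k y` satisfy `A x = b`,
then `h_{k+1,k} = 0`. -/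
theorem fgmres_breakdown_converse {m n k : ℕ} (hk : 0 < k)
    (A : Matrix (Fin m) (Fin n) ℝ) (b : Fin m → ℝ) (x₀ : Fin n → ℝ)
    (r₀ : Fin m → ℝ) (β : ℝ)
    (hr₀ : r₀ = b - A.mulVec x₀) (hβ0 : β ≠ 0)
    (Z : Matrix (Fin n) (Fin k) ℝ) (V : Matrix (Fin m) (Fin (k + 1)) ℝ)
    (Hbar : Matrix (Fin (k + 1)) (Fin k) ℝ)
    (hVtV : Vᵀ * V = 1)
    (hv₁ : ∀ i, V i 0 = r₀ i / β)
    (hHess : ∀ (i : Fin (k + 1)) (j : Fin k), (j : ℕ) + 1 < (i : ℕ) → Hbar i j = 0)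
    (hsub : ∀ (i : Fin (k + 1)) (j : Fin k),
      (i : ℕ) = (j : ℕ) + 1 → (j : ℕ) + 1 < k → Hbar i j ≠ 0)
    (hAZ : A * Z = V * Hbar)
    (y : Fin k → ℝ) (hx : A.mulVec (x₀ + Z.mulVec y) = b) :
    Hbar (Fin.last k) ⟨k - 1, by omega⟩ = 0 := by
  by_contra hlast
  have hdiag : ∀ j : Fin k, Hbar j.succ j ≠ 0 := fun j => by
    rcases Nat.lt_or_ge ((j : ℕ) + 1) k with hj | hj
    · exact hsub j.succ j rfl hj
    · convert hlast using 2 <;> ext <;> simp <;> omega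
  have hr₀V : r₀ = V *ᵥ Pi.single 0 β := funext fun i => by
    simp [hv₁, div_mul_cancel₀ _ hβ0]
  have hAZy : A *ᵥ (Z *ᵥ y) = r₀ := by
    rw [hr₀, ← hx, mulVec_add, add_sub_cancel_left]
  have hHy : Hbar *ᵥ y = Pi.single 0 β := mulVec_injective_of_mul_eq_one hVtV <| by
    rw [mulVec_mulVec, ← hAZ, ← mulVec_mulVec, hAZy, hr₀V]
  have hy : y = 0 := eq_zero_of_hessenberg_mulVec_eq_single_zero hHess hdiag hHy
  exact hβ0 (by simpa [hy] using (congrFun hHy 0).symm)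
end
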